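/- Let G be a simple graph and 1 ≤ r ≤ s. Setting α = (r/s)·⌈s/r⌉, we have α · (λ_r(G)/r) ≥ λ_s(G)/s, equivalently ⌈s/r⌉·λ_r(G) ≥ λ_s(G). -/

import Mathlib

open SimpleGraph

/-- `c` properly colors each vertex of `S` from its list `L`. -/
def IsPartialListColoring {V : Type*} (G : SimpleGraph V) (L : V → Finset ℕ)
    (S : Set V) (c : V → ℕ) : Prop :=
  (∀ v ∈ S, c v ∈ L v) ∧ ∀ u ∈ S, ∀ v ∈ S, G.Adj u v → c u ≠ c v

/-- `λ_L(G)`: the maximum number of vertices properly colorable from the lists of `L`. -/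
noncomputable def lamL {V : Type*} (G : SimpleGraph V) (L : V → Finset ℕ) : ℕ :=
  sSup {k | ∃ (S : Finset V) (c : V → ℕ), S.card = k ∧ IsPartialListColoring G L S c}

/-- `λ_t(G)`: the minimum of `λ_L(G)` over all `t`-list assignments `L`. -/
noncomputable def lam {V : Type*} (G : SimpleGraph V) (t : ℕ) : ℕ :=
  sInf {m | ∃ L : V → Finset ℕ, (∀ v, (L v).card = t) ∧ lamL G L = m}

/-- `G` admits a full proper coloring from the lists of `L`. -/
def ListColorable {V : Type*} (G : SimpleGraph V) (L : V → Finset ℕ) : Prop :=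
  ∃ c : V → ℕ, (∀ v, c v ∈ L v) ∧ ∀ u v, G.Adj u v → c u ≠ c v

/-- The list chromatic number of `G`. -/
noncomputable def listChromaticNumber {V : Type*} (G : SimpleGraph V) : ℕ :=
  sInf {k | ∀ L : V → Finset ℕ, (∀ v, (L v).card = k) → ListColorable G L}

lemma lamL_bddAbove {V : Type*} [Fintype V] (G : SimpleGraph V) (L : V → Finset ℕ) :
    BddAbove {k | ∃ (S : Finset V) (c : V → ℕ), S.card = k ∧ IsPartialListColoring G L S c} := by
  refine ⟨Fintype.card V, ?_⟩
  rintro k ⟨S, c, rfl, _⟩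
  exact S.card_le_univ

lemma card_le_lamL {V : Type*} [Fintype V] (G : SimpleGraph V) (L : V → Finset ℕ)
    (S : Finset V) (c : V → ℕ) (h : IsPartialListColoring G L S c) :
    S.card ≤ lamL G L :=
  le_csSup (lamL_bddAbove G L) ⟨S, c, rfl, h⟩

lemma lamL_mono {V : Type*} [Fintype V] (G : SimpleGraph V) (L L' : V → Finset ℕ)
    (h : ∀ v, L v ⊆ L' v) : lamL G L ≤ lamL G L' := by
  refine csSup_le_csSup (lamL_bddAbove G L') ⟨0, ∅, fun _ => 0, by simp, ?_, ?_⟩ ?_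
  · simp
  · simp
  · rintro k ⟨S, c, rfl, h1, h2⟩
    exact ⟨S, c, rfl, fun v hv => h v (h1 v hv), h2⟩

/-- The key combinatorial lemma: `λ_s(G) ≤ ⌈s/r⌉ · λ_r(G)`. -/
lemma lam_le_ceilDiv_mul {V : Type*} [Fintype V] (G : SimpleGraph V)
    (r s : ℕ) (hr : 1 ≤ r) (hrs : r ≤ s) :
    lam G s ≤ (s ⌈/⌉ r) * lam G r := by
  obtain ⟨t, ht⟩ : ∃ t, t = s ⌈/⌉ r := ⟨_, rfl⟩
  rw [← ht]
  classical
  -- choose an r-assignment achieving λ_r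
  have hne : {m | ∃ L : V → Finset ℕ, (∀ v, (L v).card = r) ∧ lamL G L = m}.Nonempty :=
    ⟨lamL G (fun _ => Finset.range r), fun _ => Finset.range r, fun _ => by simp, rfl⟩
  obtain ⟨L', hL'card, hL'⟩ := Nat.sInf_mem hne
  have hLr : lamL G L' = lam G r := hL'
  clear hL' hne
  have hst : s ≤ t * r := by
    have h := le_smul_ceilDiv (b := s) (a := r) (Nat.lt_of_lt_of_le Nat.zero_lt_one hr)
    rw [smul_eq_mul] at h
    rw [ht, Nat.mul_comm]
    exact h
  -- the big list: t disjoint shifted copies of L'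
  set bigL : V → Finset ℕ :=
    fun v => (Finset.range t).biUnion (fun i => (L' v).image (fun x => x * t + i)) with hbigL
  have ht1 : 1 ≤ t := by
    rcases Nat.eq_zero_or_pos t with h0 | h1
    · subst h0; simp at hst; omega
    · exact h1
  have hbigcard : ∀ v, (bigL v).card = t * r := by
    intro v
    rw [hbigL]
    rw [Finset.card_biUnion]
    · have : ∀ i ∈ Finset.range t, ((L' v).image (fun x => x * t + i)).card = r := by
        intro i hi
        rw [Finset.card_image_of_injective, hL'card v]
        intro a b hab
        exact Nat.eq_of_mul_eq_mul_right (by omega) (Nat.add_right_cancel hab)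
      rw [Finset.sum_congr rfl this]
      simp [Nat.mul_comm]
    · intro i hi j hj hij
      simp only [Finset.disjoint_left, Finset.mem_image]
      rintro a ⟨x, hx, rfl⟩ ⟨y, hy, hxy⟩
      simp only [Finset.coe_range, Set.mem_Iio, Finset.mem_coe, Finset.mem_range] at hi hj
      apply hij
      calc i = (x * t + i) % t := by
              rw [Nat.mul_comm x t, Nat.mul_add_mod, Nat.mod_eq_of_lt hi]
        _ = (y * t + j) % t := by rw [hxy]
        _ = j := by rw [Nat.mul_comm y t, Nat.mul_add_mod, Nat.mod_eq_of_lt hj]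
  -- choose a sub-assignment of size exactly s
  have hsub : ∀ v, ∃ T : Finset ℕ, T ⊆ bigL v ∧ T.card = s := by
    intro v
    exact Finset.exists_subset_card_eq (by rw [hbigcard v]; exact hst)
  choose L hLsub hLcard using hsub
  -- λ_s ≤ λ_L ≤ λ_bigL ≤ t * λ_L' = t * λ_r
  have h1 : lam G s ≤ lamL G L := Nat.sInf_le ⟨L, hLcard, rfl⟩
  have h2 : lamL G L ≤ lamL G bigL := lamL_mono G L bigL hLsub
  have h3 : lamL G bigL ≤ t * lamL G L' := by
    refine csSup_le ⟨0, ∅, fun _ => 0, by simp, by simp, by simp⟩ ?_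
    rintro k ⟨S, c, rfl, hc1, hc2⟩
    -- split S by c v % t
    have hSsplit : S.card = ∑ i ∈ Finset.range t, (S.filter (fun v => c v % t = i)).card := by
      rw [← Finset.card_biUnion]
      · congr 1
        ext v
        simp only [Finset.mem_biUnion, Finset.mem_filter, Finset.mem_range]
        constructor
        · intro hv
          exact ⟨c v % t, Nat.mod_lt _ (by omega), hv, rfl⟩
        · rintro ⟨i, _, hv, _⟩; exact hv
      · intro i hi j hj hij
        simp only [Finset.disjoint_left, Finset.mem_filter]
        rintro v ⟨_, hvi⟩ ⟨_, hvj⟩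
        exact hij (hvi ▸ hvj)
    rw [hSsplit]
    calc ∑ i ∈ Finset.range t, (S.filter (fun v => c v % t = i)).card
        ≤ ∑ _i ∈ Finset.range t, lamL G L' := by
          apply Finset.sum_le_sum
          intro i hi
          apply card_le_lamL G L' _ (fun v => c v / t)
          constructor
          · intro v hv
            simp only [Finset.coe_filter, Set.mem_setOf_eq] at hv
            obtain ⟨hvS, hvi⟩ := hv
            have := hc1 v hvS
            simp only [hbigL, Finset.mem_biUnion, Finset.mem_image, Finset.mem_range] at this
            obtain ⟨j, hj, x, hx, hxj⟩ := this
            show c v / t ∈ L' v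
            have hdv : c v / t = x := by
              rw [← hxj, Nat.mul_comm x t, Nat.mul_add_div (by omega),
                Nat.div_eq_of_lt hj, Nat.add_zero]
            rwa [hdv]
          · intro u hu v hv hadj
            simp only [Finset.coe_filter, Set.mem_setOf_eq] at hu hv
            have hne := hc2 u hu.1 v hv.1 hadj
            have h1 := hu.2
            have h2 := hv.2
            show c u / t ≠ c v / t
            intro heq
            apply hne
            calc c u = t * (c u / t) + c u % t := (Nat.div_add_mod _ _).symm
              _ = t * (c v / t) + c v % t := by rw [heq, hu.2, hv.2]
              _ = c v := Nat.div_add_mod _ _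
      _ = t * lamL G L' := by simp [Nat.mul_comm]
  calc lam G s ≤ lamL G L := h1
    _ ≤ lamL G bigL := h2
    _ ≤ t * lamL G L' := h3
    _ = t * lam G r := by rw [hLr]

theorem lam_ratio_ceil_bound {V : Type*} [Fintype V] (G : SimpleGraph V)
    (r s : ℕ) (hr : 1 ≤ r) (hrs : r ≤ s) :
    (lam G s : ℝ) / s ≤ ((r : ℝ) / s * ((s ⌈/⌉ r : ℕ) : ℝ)) * ((lam G r : ℝ) / r) := by
  have hkey : lam G s ≤ (s ⌈/⌉ r) * lam G r := lam_le_ceilDiv_mul G r s hr hrs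
  have hr' : (0 : ℝ) < r := by exact_mod_cast Nat.lt_of_lt_of_le Nat.zero_lt_one hr
  have hs' : (0 : ℝ) < s := by exact_mod_cast Nat.lt_of_lt_of_le Nat.zero_lt_one (hr.trans hrs)
  have hkey' : (lam G s : ℝ) ≤ ((s ⌈/⌉ r : ℕ) : ℝ) * (lam G r : ℝ) := by
    exact_mod_cast hkey
  have heq : ((r : ℝ) / s * ((s ⌈/⌉ r : ℕ) : ℝ)) * ((lam G r : ℝ) / r)
      = ((s ⌈/⌉ r : ℕ) : ℝ) * (lam G r : ℝ) / s := by
    field_simp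
  rw [heq, div_le_div_iff₀ hs' hs']
  nlinarith [hkey', hs'.le]
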